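/- arXiv:2310.10883 — 3 statements merged into one kernel-verified Lean document; each statement's English description precedes it below -/
import Mathlib

section
/- Let p, q ≥ 2 and m ≥ 3 be integers with p = q whenever m is odd. Define c = -cos(π/m) and α = -((cos(π/p - π/q) + cos(2π/m)) / (2 sin(π/p) sin(π/q)))^{1/2} (assuming the quantity under the square root is nonnegative). Then α ≤ c. -/
open Real

private lemma aux_even (ca cb sa sb cm : ℝ) (hca : 0 ≤ ca) (hcb : 0 ≤ cb)
    (hsab : sa * sb ≤ 1) (h1 : 1 ≤ 2 * cm ^ 2) :
    cm ^ 2 * (2 * sa * sb) ≤ ca * cb + sa * sb + (2 * cm ^ 2 - 1) := by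
  nlinarith [mul_nonneg hca hcb, mul_nonneg (by linarith : (0:ℝ) ≤ 2 * cm ^ 2 - 1)
    (by linarith : (0:ℝ) ≤ 1 - sa * sb)]

private lemma aux_odd (ca sa cm : ℝ) (hpyth : sa ^ 2 + ca ^ 2 = 1) :
    cm ^ 2 * (2 * sa * sa) ≤ ca * ca + sa * sa + (2 * cm ^ 2 - 1) := by
  nlinarith [mul_nonneg (sq_nonneg cm) (sq_nonneg ca)]

/-- Lemma 2.4 of the paper: for integers `p, q ≥ 2`, `m ≥ 3` with `p = q` whenever `m`
is odd, assuming the quantity under the square root is nonnegative, the number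
`α = -√((cos(π/p - π/q) + cos(2π/m)) / (2 sin(π/p) sin(π/q)))` satisfies `α ≤ -cos(π/m)`. -/
theorem stmt_0 (p q m : ℕ) (hp : 2 ≤ p) (hq : 2 ≤ q) (hm : 3 ≤ m)
    (hodd : Odd m → p = q)
    (hnn : 0 ≤ cos (π / p - π / q) + cos (2 * π / m)) :
    -Real.sqrt ((cos (π / p - π / q) + cos (2 * π / m)) /
        (2 * sin (π / p) * sin (π / q))) ≤ -cos (π / m) := by
  have hpi := Real.pi_pos
  have hp2 : (2:ℝ) ≤ (p:ℝ) := by exact_mod_cast hp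
  have hq2 : (2:ℝ) ≤ (q:ℝ) := by exact_mod_cast hq
  have hm3 : (3:ℝ) ≤ (m:ℝ) := by exact_mod_cast hm
  have hap : 0 < π / p := div_pos hpi (by linarith)
  have haq : 0 < π / q := div_pos hpi (by linarith)
  have ham : 0 < π / m := div_pos hpi (by linarith)
  have hap2 : π / p ≤ π / 2 := div_le_div_of_nonneg_left hpi.le (by norm_num) hp2
  have haq2 : π / q ≤ π / 2 := div_le_div_of_nonneg_left hpi.le (by norm_num) hq2
  have ham2 : π / m ≤ π / 3 := div_le_div_of_nonneg_left hpi.le (by norm_num) hm3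
  have hsp : 0 < sin (π / p) :=
    Real.sin_pos_of_pos_of_lt_pi hap (by linarith)
  have hsq : 0 < sin (π / q) :=
    Real.sin_pos_of_pos_of_lt_pi haq (by linarith)
  have hcp : 0 ≤ cos (π / p) :=
    Real.cos_nonneg_of_mem_Icc ⟨by linarith, hap2⟩
  have hcq : 0 ≤ cos (π / q) :=
    Real.cos_nonneg_of_mem_Icc ⟨by linarith, haq2⟩
  have hcm : 0 ≤ cos (π / m) :=
    Real.cos_nonneg_of_mem_Icc ⟨by linarith, by linarith⟩
  have hD : 0 < 2 * sin (π / p) * sin (π / q) := by positivity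
  -- main trig inequality
  have key : cos (π / m) ^ 2 * (2 * sin (π / p) * sin (π / q)) ≤
      cos (π / p - π / q) + cos (2 * π / m) := by
    have h2 : 2 * π / m = 2 * (π / m) := by ring
    rw [h2, Real.cos_two_mul, Real.cos_sub]
    rcases Nat.even_or_odd m with hme | hmo
    · -- m even, so m ≥ 4, and π/m ≤ π/4
      have hm4 : 4 ≤ m := by
        rcases hme with ⟨k, hk⟩; omega
      have hm4' : (4:ℝ) ≤ (m:ℝ) := by exact_mod_cast hm4
      have ham4 : π / m ≤ π / 4 := div_le_div_of_nonneg_left hpi.le (by norm_num) hm4'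
      have hcos4 : Real.cos (π / 4) ≤ cos (π / m) :=
        Real.cos_le_cos_of_nonneg_of_le_pi (by linarith) (by linarith) ham4
      rw [Real.cos_pi_div_four] at hcos4
      have hsqrt2 : Real.sqrt 2 ^ 2 = 2 := Real.sq_sqrt (by norm_num)
      have h1 : 1 ≤ 2 * cos (π / m) ^ 2 := by nlinarith [Real.sqrt_nonneg 2]
      have hs1 : sin (π / p) ≤ 1 := Real.sin_le_one _
      have hs2 : sin (π / q) ≤ 1 := Real.sin_le_one _
      have hsab : sin (π / p) * sin (π / q) ≤ 1 := by nlinarith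
      have := aux_even (cos (π / p)) (cos (π / q)) (sin (π / p)) (sin (π / q))
        (cos (π / m)) hcp hcq hsab h1
      linarith
    · -- m odd, so p = q
      have hpq := hodd hmo
      subst hpq
      have := aux_odd (cos (π / p)) (sin (π / p)) (cos (π / m))
        (Real.sin_sq_add_cos_sq (π / p))
      linarith
  have hle : cos (π / m) ^ 2 ≤ (cos (π / p - π / q) + cos (2 * π / m)) /
      (2 * sin (π / p) * sin (π / q)) := (le_div_iff₀ hD).mpr key
  have : cos (π / m) ≤ Real.sqrt ((cos (π / p - π / q) + cos (2 * π / m)) /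
      (2 * sin (π / p) * sin (π / q))) := by
    calc cos (π / m) = Real.sqrt (cos (π / m) ^ 2) := (Real.sqrt_sq hcm).symm
      _ ≤ _ := Real.sqrt_le_sqrt hle
  linarith
end

section
/- Let p, q ≥ 2 and m ≥ 3 be integers, and set α² = (cos(π/p - π/q) + cos(2π/m)) / (2 sin(π/p) sin(π/q)). Then α² < 1 if and only if 1/p + 1/q + 2/m > 1. -/
open Real

/-! Since `cos (a - b) - 2 sin a sin b = cos (a + b)`, the inequality `α² < 1` says
`cos (π/p + π/q) + cos (2π/m) < 0`. Both angles lie in `[0, π]`, where `cos` is strictly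
decreasing, so this means `π/p + π/q > π - 2π/m`. -/

lemma div_two_mul_sin_mul_sin_lt_one_iff {a b c : ℝ} (h : 0 < sin a * sin b) :
    (cos (a - b) + c) / (2 * sin a * sin b) < 1 ↔ cos (a + b) + c < 0 := by
  rw [div_lt_one (by linarith), cos_add, cos_sub]
  constructor <;> intro <;> linarith

lemma cos_add_cos_neg_iff {x y : ℝ} (hx : x ∈ Set.Icc 0 π) (hy : y ∈ Set.Icc 0 π) :
    cos x + cos y < 0 ↔ π < x + y := by
  have hπy : π - y ∈ Set.Icc 0 π := ⟨by linarith [hy.2], by linarith [hy.1]⟩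
  rw [← sub_neg_eq_add, sub_neg, ← cos_pi_sub, strictAntiOn_cos.lt_iff_gt hx hπy]
  constructor <;> intro <;> linarith

lemma pi_div_natCast_mem_Ioc {k n : ℕ} (hk : 0 < k) (h : k ≤ n) :
    π / n ∈ Set.Ioc 0 (π / k) :=
  ⟨div_pos pi_pos (by norm_cast; omega),
    div_le_div_of_nonneg_left pi_pos.le (by exact_mod_cast hk) (by exact_mod_cast h)⟩

/-- For integers `p, q ≥ 2` and `m ≥ 3`, with
`α² = (cos(π/p - π/q) + cos(2π/m)) / (2 sin(π/p) sin(π/q))`, one has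
`α² < 1 ↔ 1/p + 1/q + 2/m > 1`. -/
theorem stmt_1 (p q m : ℕ) (hp : 2 ≤ p) (hq : 2 ≤ q) (hm : 3 ≤ m) :
    (cos (π / p - π / q) + cos (2 * π / m)) / (2 * sin (π / p) * sin (π / q)) < 1 ↔
      1 < 1 / (p : ℝ) + 1 / (q : ℝ) + 2 / (m : ℝ) := by
  obtain ⟨hp0, hp2⟩ := pi_div_natCast_mem_Ioc (by norm_num) hp
  obtain ⟨hq0, hq2⟩ := pi_div_natCast_mem_Ioc (by norm_num) hq
  obtain ⟨hm0, hm3⟩ := pi_div_natCast_mem_Ioc (by norm_num) hm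
  push_cast at hp2 hq2 hm3
  have hsin : 0 < sin (π / p) * sin (π / q) :=
    mul_pos (sin_pos_of_pos_of_lt_pi hp0 (by linarith)) (sin_pos_of_pos_of_lt_pi hq0 (by linarith))
  have hm_mem : 2 * π / m ∈ Set.Icc 0 π := by
    rw [mul_div_assoc]; exact ⟨by linarith, by linarith [pi_pos]⟩
  have hsum : π / p + π / q + 2 * π / m = π * (1 / p + 1 / q + 2 / m) := by ring
  rw [div_two_mul_sin_mul_sin_lt_one_iff hsin,
    cos_add_cos_neg_iff ⟨by linarith, by linarith⟩ hm_mem,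
    hsum, lt_mul_iff_one_lt_right pi_pos]
end

section
/- In the Hessian polyhedron ℋ (combinatorially given by the 27 vertices, 72 three-point edges, and 27 eight-vertex faces listed in the paper's tables), if E₁, E₂, E₃ are distinct edges that pairwise intersect nontrivially but have empty total intersection, then there exists a face F of ℋ containing all three edges E₁, E₂, E₃. -/
open Real

/-- The primitive cube root of unity `ω = exp(2πi/3)`. -/
noncomputable def ω : ℂ := Complex.exp (2 * π * Complex.I / 3)

/-- The 27 symbols `0ij`, `j0i`, `ij0` (`i, j ∈ {1,2,3}`) labelling the vertices of the
Hessian polyhedron. -/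
def HSyms : Finset (ℕ × ℕ × ℕ) :=
  {(0, 1, 1), (0, 1, 2), (0, 1, 3), (0, 2, 1), (0, 2, 2), (0, 2, 3), (0, 3, 1), (0, 3, 2), (0, 3, 3), (1, 0, 1), (1, 0, 2), (1, 0, 3), (1, 1, 0), (1, 2, 0), (1, 3, 0), (2, 0, 1), (2, 0, 2), (2, 0, 3), (2, 1, 0), (2, 2, 0), (2, 3, 0), (3, 0, 1), (3, 0, 2), (3, 0, 3), (3, 1, 0), (3, 2, 0), (3, 3, 0)}

/-- The vertex of the Hessian polyhedron in `ℂ³` corresponding to a symbol: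
`0ij ↦ (0, ωⁱ, -ωʲ)`, `j0i ↦ (-ωʲ, 0, ωⁱ)`, `ij0 ↦ (ωⁱ, -ωʲ, 0)`. -/
noncomputable def toPt (s : ℕ × ℕ × ℕ) : ℂ × ℂ × ℂ :=
  if s.1 = 0 then (0, ω ^ s.2.1, -ω ^ s.2.2)
  else if s.2.1 = 0 then (-ω ^ s.1, 0, ω ^ s.2.2)
  else (ω ^ s.1, -ω ^ s.2.1, 0)

/-- The number of positions in which two symbols agree. -/
def agreeCount (u v : ℕ × ℕ × ℕ) : ℕ :=
  (if u.1 = v.1 then 1 else 0) + (if u.2.1 = v.2.1 then 1 else 0) +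
    (if u.2.2 = v.2.2 then 1 else 0)

/-- Two distinct vertices are adjacent (lie on a common edge of the Hessian polyhedron)
iff their symbols agree in an even number of positions: exactly two or none. -/
def hadj (u v : ℕ × ℕ × ℕ) : Prop :=
  u ≠ v ∧ (agreeCount u v = 0 ∨ agreeCount u v = 2)

open Classical in
/-- The edges of the Hessian polyhedron: 3-element sets of vertex symbols that are
pairwise adjacent and whose points in `ℂ³` are collinear (lie on a common complex
affine line). -/
noncomputable def HEdges : Finset (Finset (ℕ × ℕ × ℕ)) :=
  (HSyms.powersetCard 3).filter fun T =>
    (∀ u ∈ T, ∀ v ∈ T, u ≠ v → hadj u v) ∧ Collinear ℂ (toPt '' (↑T : Set (ℕ × ℕ × ℕ)))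

/-- The 27 faces of the Hessian polyhedron, each given by its 8 vertex symbols
(Table 7 of the paper). -/
def HFaces : Fin 27 → Finset (ℕ × ℕ × ℕ) :=
  ![{(0, 1, 2), (0, 2, 1), (1, 0, 3), (2, 0, 3), (3, 0, 3), (1, 3, 0), (2, 3, 0), (3, 3, 0)},
    {(3, 0, 2), (0, 2, 2), (0, 2, 3), (1, 1, 0), (3, 0, 1), (3, 0, 3), (2, 3, 0), (0, 2, 1)},
    {(2, 0, 2), (0, 2, 2), (3, 1, 0), (2, 0, 1), (0, 2, 3), (1, 3, 0), (0, 2, 1), (2, 0, 3)},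
    {(3, 2, 0), (0, 2, 2), (1, 0, 1), (3, 1, 0), (0, 3, 2), (2, 0, 3), (0, 1, 2), (3, 3, 0)},
    {(1, 0, 2), (0, 2, 2), (1, 0, 1), (0, 2, 3), (2, 1, 0), (0, 2, 1), (1, 0, 3), (3, 3, 0)},
    {(0, 1, 1), (0, 2, 3), (1, 0, 2), (2, 0, 2), (3, 0, 2), (1, 3, 0), (2, 3, 0), (3, 3, 0)},
    {(2, 2, 0), (0, 2, 2), (2, 1, 0), (0, 3, 2), (3, 0, 1), (0, 1, 2), (2, 3, 0), (1, 0, 3)},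
    {(1, 2, 0), (0, 2, 2), (0, 3, 2), (2, 0, 1), (1, 1, 0), (1, 3, 0), (3, 0, 3), (0, 1, 2)},
    {(0, 3, 1), (0, 2, 2), (3, 1, 0), (1, 1, 0), (2, 1, 0), (3, 0, 3), (1, 0, 3), (2, 0, 3)},
    {(0, 1, 1), (3, 1, 0), (3, 2, 0), (2, 0, 2), (0, 3, 1), (0, 2, 1), (1, 0, 3), (3, 3, 0)},
    {(3, 2, 0), (0, 2, 3), (1, 0, 2), (3, 1, 0), (0, 3, 3), (2, 0, 1), (0, 1, 3), (3, 3, 0)},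
    {(2, 2, 0), (0, 2, 3), (2, 1, 0), (0, 3, 3), (3, 0, 2), (0, 1, 3), (2, 3, 0), (1, 0, 1)},
    {(1, 2, 0), (0, 2, 3), (0, 3, 3), (2, 0, 2), (1, 1, 0), (1, 3, 0), (3, 0, 1), (0, 1, 3)},
    {(0, 3, 2), (0, 2, 3), (3, 1, 0), (1, 1, 0), (2, 1, 0), (3, 0, 1), (1, 0, 1), (2, 0, 1)},
    {(2, 2, 0), (0, 2, 1), (2, 1, 0), (0, 3, 1), (3, 0, 3), (0, 1, 1), (2, 3, 0), (1, 0, 2)},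
    {(1, 2, 0), (0, 2, 1), (0, 3, 1), (2, 0, 3), (1, 1, 0), (1, 3, 0), (3, 0, 2), (0, 1, 1)},
    {(0, 3, 3), (0, 2, 1), (3, 1, 0), (1, 1, 0), (2, 1, 0), (3, 0, 2), (1, 0, 2), (2, 0, 2)},
    {(2, 2, 0), (3, 1, 0), (0, 3, 2), (0, 3, 3), (0, 3, 1), (1, 0, 2), (1, 0, 3), (1, 0, 1)},
    {(2, 2, 0), (2, 0, 3), (0, 3, 2), (1, 2, 0), (3, 0, 3), (0, 1, 1), (1, 0, 3), (3, 2, 0)},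
    {(0, 3, 3), (2, 0, 3), (2, 0, 1), (1, 1, 0), (0, 3, 2), (0, 3, 1), (3, 2, 0), (2, 0, 2)},
    {(2, 2, 0), (2, 0, 1), (3, 0, 1), (0, 3, 3), (1, 2, 0), (3, 2, 0), (0, 1, 2), (1, 0, 1)},
    {(2, 2, 0), (1, 3, 0), (3, 0, 1), (3, 0, 2), (3, 0, 3), (0, 1, 1), (0, 1, 2), (0, 1, 3)},
    {(0, 3, 3), (3, 0, 3), (3, 0, 1), (2, 1, 0), (0, 3, 2), (0, 3, 1), (1, 2, 0), (3, 0, 2)},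
    {(3, 2, 0), (2, 3, 0), (1, 0, 1), (1, 0, 2), (1, 0, 3), (0, 1, 1), (0, 1, 2), (0, 1, 3)},
    {(2, 2, 0), (2, 0, 2), (3, 0, 2), (0, 3, 1), (1, 2, 0), (3, 2, 0), (0, 1, 3), (1, 0, 2)},
    {(1, 2, 0), (3, 3, 0), (2, 0, 1), (2, 0, 2), (2, 0, 3), (0, 1, 1), (0, 1, 2), (0, 1, 3)},
    {(0, 1, 3), (0, 2, 2), (1, 0, 1), (2, 0, 1), (3, 0, 1), (1, 3, 0), (2, 3, 0), (3, 3, 0)}]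


lemma ω_im_ne : ω.im ≠ 0 := by
  have h : (2 * π * Complex.I / 3) = (↑(2 * π / 3)) * Complex.I := by push_cast; ring
  rw [ω, h, Complex.exp_ofReal_mul_I_im]
  have hpi := Real.pi_pos
  have := Real.sin_pos_of_pos_of_lt_pi (x := 2 * π / 3) (by linarith) (by linarith)
  linarith
lemma ω_cube : ω ^ 3 = 1 := by
  rw [ω, ← Complex.exp_nat_mul]
  rw [show ((3:ℕ):ℂ) * (2 * ↑π * Complex.I / 3) = 2 * ↑π * Complex.I by push_cast; ring]
  exact Complex.exp_two_pi_mul_I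
lemma ω_ne_one : ω ≠ 1 := fun h => ω_im_ne (by rw [h]; simp)
lemma ω_sq : ω ^ 2 = -1 - ω := by
  have h : (ω - 1) * (ω ^ 2 + ω + 1) = 0 := by linear_combination ω_cube
  rcases mul_eq_zero.1 h with h1 | h2
  · exact absurd (by linear_combination h1 : ω = 1) ω_ne_one
  · linear_combination h2


-- ℤ[ω] as pairs
def zmul (x y : ℤ × ℤ) : ℤ × ℤ := (x.1 * y.1 - x.2 * y.2, x.1 * y.2 + x.2 * y.1 - x.2 * y.2)
noncomputable def fz (x : ℤ × ℤ) : ℂ := (x.1 : ℂ) + (x.2 : ℂ) * ω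

lemma fz_mul (x y : ℤ × ℤ) : fz (zmul x y) = fz x * fz y := by
  simp only [fz, zmul]
  push_cast
  linear_combination (-(x.2 : ℂ) * y.2) * ω_sq

lemma fz_sub (x y : ℤ × ℤ) : fz (x - y) = fz x - fz y := by
  simp only [fz, Prod.fst_sub, Prod.snd_sub]; push_cast; ring

lemma fz_eq_zero {x : ℤ × ℤ} (h : fz x = 0) : x = 0 := by
  have him : (fz x).im = 0 := by rw [h]; rfl
  have hre : (fz x).re = 0 := by rw [h]; rfl
  simp only [fz, Complex.add_im, Complex.intCast_im, Complex.mul_im, Complex.intCast_re,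
    Complex.intCast_im, Complex.add_re, Complex.mul_re] at him hre
  have h2 : (x.2 : ℝ) = 0 := by
    rcases mul_eq_zero.1 (by linarith : (x.2 : ℝ) * ω.im = 0) with h | h
    · exact h
    · exact absurd h ω_im_ne
  have h2' : x.2 = 0 := by exact_mod_cast h2
  have h1' : x.1 = 0 := by
    rw [h2'] at hre; push_cast at hre; exact_mod_cast (by linarith : (x.1 : ℝ) = 0)
  exact Prod.ext h1' h2'

lemma fz_inj {x y : ℤ × ℤ} (h : fz x = fz y) : x = y := by
  have := fz_eq_zero (x := x - y) (by rw [fz_sub, h, sub_self])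
  exact sub_eq_zero.1 this

def pw (k : ℕ) : ℤ × ℤ := if k % 3 = 0 then (1, 0) else if k % 3 = 1 then (0, 1) else (-1, -1)

lemma pw_spec (k : ℕ) : ω ^ k = fz (pw k) := by
  conv_lhs => rw [show k = 3 * (k / 3) + k % 3 from (Nat.div_add_mod k 3).symm ▸ rfl]
  rw [pow_add, pow_mul, ω_cube, one_pow, one_mul]
  have h3 : k % 3 < 3 := Nat.mod_lt _ (by norm_num)
  unfold pw
  interval_cases h : k % 3
  · simp [fz]
  · simp [fz]
  · simp only [fz]
    norm_num
    linear_combination ω_sq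

def symZ (s : ℕ × ℕ × ℕ) : (ℤ × ℤ) × (ℤ × ℤ) × (ℤ × ℤ) :=
  if s.1 = 0 then ((0, 0), pw s.2.1, -pw s.2.2)
  else if s.2.1 = 0 then (-pw s.1, (0, 0), pw s.2.2)
  else (pw s.1, -pw s.2.1, (0, 0))

lemma fz_zero : fz (0, 0) = 0 := by simp [fz]
lemma fz_zero' : fz 0 = 0 := by simp [fz]
lemma fz_neg (x : ℤ × ℤ) : fz (-x) = -fz x := by
  simp only [fz, Prod.fst_neg, Prod.snd_neg]; push_cast; ring

lemma toPt_eq (s : ℕ × ℕ × ℕ) :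
    toPt s = (fz (symZ s).1, fz (symZ s).2.1, fz (symZ s).2.2) := by
  unfold toPt symZ
  split_ifs <;> simp [pw_spec, fz_neg, fz_zero, fz_zero']

/-- some 2×2 minor nonzero -/
def ncolZ (u v w : ℕ × ℕ × ℕ) : Prop :=
  zmul (symZ v - symZ u).1 (symZ w - symZ u).2.1 ≠ zmul (symZ v - symZ u).2.1 (symZ w - symZ u).1 ∨
  zmul (symZ v - symZ u).1 (symZ w - symZ u).2.2 ≠ zmul (symZ v - symZ u).2.2 (symZ w - symZ u).1 ∨
  zmul (symZ v - symZ u).2.1 (symZ w - symZ u).2.2 ≠ zmul (symZ v - symZ u).2.2 (symZ w - symZ u).2.1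

lemma not_collinear_of_ncolZ {u v w : ℕ × ℕ × ℕ} (h : ncolZ u v w) :
    ¬ Collinear ℂ ({toPt u, toPt v, toPt w} : Set (ℂ × ℂ × ℂ)) := by
  intro hc
  rw [collinear_iff_of_mem (Set.mem_insert _ _)] at hc
  obtain ⟨d, hd⟩ := hc
  obtain ⟨a, ha⟩ := hd (toPt v) (by simp)
  obtain ⟨b, hb⟩ := hd (toPt w) (by simp)
  obtain ⟨d1, d2, d3⟩ := d
  rw [toPt_eq u, toPt_eq v] at ha
  rw [toPt_eq u, toPt_eq w] at hb
  have ha1 : fz (symZ v).1 = a * d1 + fz (symZ u).1 := congrArg Prod.fst ha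
  have ha2 : fz (symZ v).2.1 = a * d2 + fz (symZ u).2.1 := congrArg (fun p => p.2.1) ha
  have ha3 : fz (symZ v).2.2 = a * d3 + fz (symZ u).2.2 := congrArg (fun p => p.2.2) ha
  have hb1 : fz (symZ w).1 = b * d1 + fz (symZ u).1 := congrArg Prod.fst hb
  have hb2 : fz (symZ w).2.1 = b * d2 + fz (symZ u).2.1 := congrArg (fun p => p.2.1) hb
  have hb3 : fz (symZ w).2.2 = b * d3 + fz (symZ u).2.2 := congrArg (fun p => p.2.2) hb
  simp only [ncolZ, Prod.fst_sub, Prod.snd_sub] at h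
  rcases h with h | h | h
  · exact h (fz_inj (by rw [fz_mul, fz_mul, fz_sub, fz_sub, fz_sub, fz_sub, ha1, ha2, hb1, hb2]; ring))
  · exact h (fz_inj (by rw [fz_mul, fz_mul, fz_sub, fz_sub, fz_sub, fz_sub, ha1, ha3, hb1, hb3]; ring))
  · exact h (fz_inj (by rw [fz_mul, fz_mul, fz_sub, fz_sub, fz_sub, fz_sub, ha2, ha3, hb2, hb3]; ring))

instance ncolZ.dec (u v w : ℕ × ℕ × ℕ) : Decidable (ncolZ u v w) := by
  unfold ncolZ; infer_instance

def symList : List (ℕ × ℕ × ℕ) := [(0, 1, 1), (0, 1, 2), (0, 1, 3), (0, 2, 1), (0, 2, 2), (0, 2, 3), (0, 3, 1), (0, 3, 2), (0, 3, 3), (1, 0, 1), (1, 0, 2), (1, 0, 3), (2, 0, 1), (2, 0, 2), (2, 0, 3), (3, 0, 1), (3, 0, 2), (3, 0, 3), (1, 1, 0), (1, 2, 0), (1, 3, 0), (2, 1, 0), (2, 2, 0), (2, 3, 0), (3, 1, 0), (3, 2, 0), (3, 3, 0)]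

def P : List (Finset (ℕ × ℕ × ℕ) × ℕ) :=
  [({(0, 1, 1), (0, 1, 2), (0, 1, 3)}, 7),
   ({(0, 1, 1), (0, 2, 1), (0, 3, 1)}, 73),
   ({(0, 1, 1), (1, 0, 2), (2, 3, 0)}, 8389633),
   ({(0, 1, 1), (1, 0, 3), (3, 2, 0)}, 33556481),
   ({(0, 1, 1), (2, 0, 2), (3, 3, 0)}, 67117057),
   ({(0, 1, 1), (1, 2, 0), (2, 0, 3)}, 540673),
   ({(0, 1, 1), (1, 3, 0), (3, 0, 2)}, 1114113),
   ({(0, 1, 1), (2, 2, 0), (3, 0, 3)}, 4325377),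
   ({(0, 1, 2), (0, 2, 2), (0, 3, 2)}, 146),
   ({(0, 1, 2), (1, 0, 1), (3, 2, 0)}, 33554946),
   ({(0, 1, 2), (1, 0, 3), (2, 3, 0)}, 8390658),
   ({(0, 1, 2), (1, 2, 0), (2, 0, 1)}, 528386),
   ({(0, 1, 2), (2, 0, 3), (3, 3, 0)}, 67125250),
   ({(0, 1, 2), (2, 2, 0), (3, 0, 1)}, 4227074),
   ({(0, 1, 2), (1, 3, 0), (3, 0, 3)}, 1179650),
   ({(0, 1, 3), (0, 2, 3), (0, 3, 3)}, 292),
   ({(0, 1, 3), (1, 0, 1), (2, 3, 0)}, 8389124),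
   ({(0, 1, 3), (1, 0, 2), (3, 2, 0)}, 33555460),
   ({(0, 1, 3), (2, 0, 1), (3, 3, 0)}, 67112964),
   ({(0, 1, 3), (1, 2, 0), (2, 0, 2)}, 532484),
   ({(0, 1, 3), (1, 3, 0), (3, 0, 1)}, 1081348),
   ({(0, 1, 3), (2, 2, 0), (3, 0, 2)}, 4259844),
   ({(0, 2, 1), (0, 2, 2), (0, 2, 3)}, 56),
   ({(0, 2, 1), (1, 0, 2), (2, 1, 0)}, 2098184),
   ({(0, 2, 1), (1, 0, 3), (3, 3, 0)}, 67110920),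
   ({(0, 2, 1), (2, 0, 2), (3, 1, 0)}, 16785416),
   ({(0, 2, 1), (1, 3, 0), (2, 0, 3)}, 1064968),
   ({(0, 2, 1), (1, 1, 0), (3, 0, 2)}, 327688),
   ({(0, 2, 1), (2, 3, 0), (3, 0, 3)}, 8519688),
   ({(0, 2, 2), (1, 0, 1), (3, 3, 0)}, 67109392),
   ({(0, 2, 2), (1, 0, 3), (2, 1, 0)}, 2099216),
   ({(0, 2, 2), (1, 3, 0), (2, 0, 1)}, 1052688),
   ({(0, 2, 2), (2, 0, 3), (3, 1, 0)}, 16793616),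
   ({(0, 2, 2), (2, 3, 0), (3, 0, 1)}, 8421392),
   ({(0, 2, 2), (1, 1, 0), (3, 0, 3)}, 393232),
   ({(0, 2, 3), (1, 0, 1), (2, 1, 0)}, 2097696),
   ({(0, 2, 3), (1, 0, 2), (3, 3, 0)}, 67109920),
   ({(0, 2, 3), (2, 0, 1), (3, 1, 0)}, 16781344),
   ({(0, 2, 3), (1, 3, 0), (2, 0, 2)}, 1056800),
   ({(0, 2, 3), (1, 1, 0), (3, 0, 1)}, 294944),
   ({(0, 2, 3), (2, 3, 0), (3, 0, 2)}, 8454176),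
   ({(0, 3, 1), (0, 3, 2), (0, 3, 3)}, 448),
   ({(0, 3, 1), (1, 0, 2), (2, 2, 0)}, 4195392),
   ({(0, 3, 1), (1, 0, 3), (3, 1, 0)}, 16779328),
   ({(0, 3, 1), (2, 0, 2), (3, 2, 0)}, 33562688),
   ({(0, 3, 1), (1, 1, 0), (2, 0, 3)}, 278592),
   ({(0, 3, 1), (1, 2, 0), (3, 0, 2)}, 589888),
   ({(0, 3, 1), (2, 1, 0), (3, 0, 3)}, 2228288),
   ({(0, 3, 2), (1, 0, 1), (3, 1, 0)}, 16777856),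
   ({(0, 3, 2), (1, 0, 3), (2, 2, 0)}, 4196480),
   ({(0, 3, 2), (1, 1, 0), (2, 0, 1)}, 266368),
   ({(0, 3, 2), (2, 0, 3), (3, 2, 0)}, 33570944),
   ({(0, 3, 2), (2, 1, 0), (3, 0, 1)}, 2130048),
   ({(0, 3, 2), (1, 2, 0), (3, 0, 3)}, 655488),
   ({(0, 3, 3), (1, 0, 1), (2, 2, 0)}, 4195072),
   ({(0, 3, 3), (1, 0, 2), (3, 1, 0)}, 16778496),
   ({(0, 3, 3), (2, 0, 1), (3, 2, 0)}, 33558784),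
   ({(0, 3, 3), (1, 1, 0), (2, 0, 2)}, 270592),
   ({(0, 3, 3), (1, 2, 0), (3, 0, 1)}, 557312),
   ({(0, 3, 3), (2, 1, 0), (3, 0, 2)}, 2162944),
   ({(1, 0, 1), (1, 0, 2), (1, 0, 3)}, 3584),
   ({(1, 0, 1), (2, 0, 1), (3, 0, 1)}, 37376),
   ({(1, 0, 2), (2, 0, 2), (3, 0, 2)}, 74752),
   ({(1, 0, 3), (2, 0, 3), (3, 0, 3)}, 149504),
   ({(2, 0, 1), (2, 0, 2), (2, 0, 3)}, 28672),
   ({(3, 0, 1), (3, 0, 2), (3, 0, 3)}, 229376),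
   ({(1, 1, 0), (1, 2, 0), (1, 3, 0)}, 1835008),
   ({(1, 1, 0), (2, 1, 0), (3, 1, 0)}, 19136512),
   ({(1, 2, 0), (2, 2, 0), (3, 2, 0)}, 38273024),
   ({(1, 3, 0), (2, 3, 0), (3, 3, 0)}, 76546048),
   ({(2, 1, 0), (2, 2, 0), (2, 3, 0)}, 14680064),
   ({(3, 1, 0), (3, 2, 0), (3, 3, 0)}, 117440512)]

def Q : List (Finset (ℕ × ℕ × ℕ) × ℕ) :=
  [({(0, 1, 2), (0, 2, 1), (1, 0, 3), (1, 3, 0), (2, 0, 3), (2, 3, 0), (3, 0, 3), (3, 3, 0)}, 76695562),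
   ({(0, 2, 1), (0, 2, 2), (0, 2, 3), (1, 1, 0), (2, 3, 0), (3, 0, 1), (3, 0, 2), (3, 0, 3)}, 8880184),
   ({(0, 2, 1), (0, 2, 2), (0, 2, 3), (1, 3, 0), (2, 0, 1), (2, 0, 2), (2, 0, 3), (3, 1, 0)}, 17854520),
   ({(0, 1, 2), (0, 2, 2), (0, 3, 2), (1, 0, 1), (2, 0, 3), (3, 1, 0), (3, 2, 0), (3, 3, 0)}, 117457554),
   ({(0, 2, 1), (0, 2, 2), (0, 2, 3), (1, 0, 1), (1, 0, 2), (1, 0, 3), (2, 1, 0), (3, 3, 0)}, 69209656),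
   ({(0, 1, 1), (0, 2, 3), (1, 0, 2), (1, 3, 0), (2, 0, 2), (2, 3, 0), (3, 0, 2), (3, 3, 0)}, 76620833),
   ({(0, 1, 2), (0, 2, 2), (0, 3, 2), (1, 0, 3), (2, 1, 0), (2, 2, 0), (2, 3, 0), (3, 0, 1)}, 14715026),
   ({(0, 1, 2), (0, 2, 2), (0, 3, 2), (1, 1, 0), (1, 2, 0), (1, 3, 0), (2, 0, 1), (3, 0, 3)}, 1970322),
   ({(0, 2, 2), (0, 3, 1), (1, 0, 3), (1, 1, 0), (2, 0, 3), (2, 1, 0), (3, 0, 3), (3, 1, 0)}, 19286096),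
   ({(0, 1, 1), (0, 2, 1), (0, 3, 1), (1, 0, 3), (2, 0, 2), (3, 1, 0), (3, 2, 0), (3, 3, 0)}, 117450825),
   ({(0, 1, 3), (0, 2, 3), (0, 3, 3), (1, 0, 2), (2, 0, 1), (3, 1, 0), (3, 2, 0), (3, 3, 0)}, 117445924),
   ({(0, 1, 3), (0, 2, 3), (0, 3, 3), (1, 0, 1), (2, 1, 0), (2, 2, 0), (2, 3, 0), (3, 0, 2)}, 14746404),
   ({(0, 1, 3), (0, 2, 3), (0, 3, 3), (1, 1, 0), (1, 2, 0), (1, 3, 0), (2, 0, 2), (3, 0, 1)}, 1876260),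
   ({(0, 2, 3), (0, 3, 2), (1, 0, 1), (1, 1, 0), (2, 0, 1), (2, 1, 0), (3, 0, 1), (3, 1, 0)}, 19174048),
   ({(0, 1, 1), (0, 2, 1), (0, 3, 1), (1, 0, 2), (2, 1, 0), (2, 2, 0), (2, 3, 0), (3, 0, 3)}, 14812233),
   ({(0, 1, 1), (0, 2, 1), (0, 3, 1), (1, 1, 0), (1, 2, 0), (1, 3, 0), (2, 0, 3), (3, 0, 2)}, 1917001),
   ({(0, 2, 1), (0, 3, 3), (1, 0, 2), (1, 1, 0), (2, 0, 2), (2, 1, 0), (3, 0, 2), (3, 1, 0)}, 19211528),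
   ({(0, 3, 1), (0, 3, 2), (0, 3, 3), (1, 0, 1), (1, 0, 2), (1, 0, 3), (2, 2, 0), (3, 1, 0)}, 20975552),
   ({(0, 1, 1), (0, 3, 2), (1, 0, 3), (1, 2, 0), (2, 0, 3), (2, 2, 0), (3, 0, 3), (3, 2, 0)}, 38422657),
   ({(0, 3, 1), (0, 3, 2), (0, 3, 3), (1, 1, 0), (2, 0, 1), (2, 0, 2), (2, 0, 3), (3, 2, 0)}, 33845696),
   ({(0, 1, 2), (0, 3, 3), (1, 0, 1), (1, 2, 0), (2, 0, 1), (2, 2, 0), (3, 0, 1), (3, 2, 0)}, 38310658),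
   ({(0, 1, 1), (0, 1, 2), (0, 1, 3), (1, 3, 0), (2, 2, 0), (3, 0, 1), (3, 0, 2), (3, 0, 3)}, 5472263),
   ({(0, 3, 1), (0, 3, 2), (0, 3, 3), (1, 2, 0), (2, 1, 0), (3, 0, 1), (3, 0, 2), (3, 0, 3)}, 2851264),
   ({(0, 1, 1), (0, 1, 2), (0, 1, 3), (1, 0, 1), (1, 0, 2), (1, 0, 3), (2, 3, 0), (3, 2, 0)}, 41946631),
   ({(0, 1, 3), (0, 3, 1), (1, 0, 2), (1, 2, 0), (2, 0, 2), (2, 2, 0), (3, 0, 2), (3, 2, 0)}, 38347844),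
   ({(0, 1, 1), (0, 1, 2), (0, 1, 3), (1, 2, 0), (2, 0, 1), (2, 0, 2), (2, 0, 3), (3, 3, 0)}, 67661831),
   ({(0, 1, 3), (0, 2, 2), (1, 0, 1), (1, 3, 0), (2, 0, 1), (2, 3, 0), (3, 0, 1), (3, 3, 0)}, 76583444)]

set_option maxRecDepth 100000 in
set_option maxHeartbeats 8000000 in
set_option synthInstance.maxSize 4000 in
set_option synthInstance.maxHeartbeats 1000000 in
lemma factD : ∀ u ∈ HSyms, ∀ v ∈ HSyms,
    (agreeCount u v = 0 ∨ agreeCount u v = 2) → u ≠ v → ∀ w ∈ HSyms,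
    (agreeCount u w = 0 ∨ agreeCount u w = 2) → (agreeCount v w = 0 ∨ agreeCount v w = 2) →
    u ≠ w → v ≠ w →
    ncolZ u v w ∨ ∃ p ∈ P, p.1 = ({u, v, w} : Finset (ℕ × ℕ × ℕ)) := by decide

set_option maxRecDepth 100000 in
set_option maxHeartbeats 8000000 in
set_option synthInstance.maxSize 4000 in
set_option synthInstance.maxHeartbeats 1000000 in
lemma maskM : ∀ p ∈ P, ∀ q ∈ P, p.2 &&& q.2 ≠ 0 → ∀ r ∈ P,
    p.2 &&& r.2 ≠ 0 → q.2 &&& r.2 ≠ 0 → p.2 &&& q.2 &&& r.2 = 0 →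
    ∃ t ∈ Q, p.2 ||| t.2 = t.2 ∧ q.2 ||| t.2 = t.2 ∧ r.2 ||| t.2 = t.2 := by decide

set_option maxRecDepth 100000 in
set_option maxHeartbeats 4000000 in
lemma bitP : ∀ p ∈ P, ∀ b : Fin 27, ((symList.getD b.val (0,0,0)) ∈ p.1) ↔ p.2.testBit b.val = true := by decide

set_option maxRecDepth 100000 in
set_option maxHeartbeats 4000000 in
lemma bitQ : ∀ q ∈ Q, ∀ b : Fin 27, ((symList.getD b.val (0,0,0)) ∈ q.1) ↔ q.2.testBit b.val = true := by decide

set_option maxRecDepth 100000 in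
lemma memP : ∀ p ∈ P, ∀ x ∈ p.1, x ∈ symList := by decide

set_option maxRecDepth 100000 in
lemma ltP : ∀ p ∈ P, p.2 < 2 ^ 27 := by decide

lemma symLen : symList.length = 27 := by decide

set_option maxRecDepth 100000 in
set_option maxHeartbeats 4000000 in
lemma QFaces : ∀ t ∈ Q, ∃ k : Fin 27, HFaces k = t.1 := by decide

lemma ne_zero_of_testBit {n : ℕ} {i : ℕ} (h : n.testBit i = true) : n ≠ 0 := by
  intro h0; rw [h0, Nat.zero_testBit] at h; exact Bool.false_ne_true h

lemma exists_testBit {n : ℕ} (h : n ≠ 0) : ∃ i, n.testBit i = true := by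
  by_contra hc
  push_neg at hc
  exact h (Nat.eq_of_testBit_eq fun i => by
    rw [Nat.zero_testBit]; exact Bool.eq_false_iff.2 (hc i))

lemma bit_lt {m i : ℕ} (hm : m < 2 ^ 27) (h : m.testBit i = true) : i < 27 := by
  by_contra hc
  push_neg at hc
  have : m < 2 ^ i := lt_of_lt_of_le hm (Nat.pow_le_pow_right (by norm_num) hc)
  rw [Nat.testBit_lt_two_pow this] at h
  exact Bool.false_ne_true h

-- index of a member symbol
lemma mem_sym_index {x : ℕ × ℕ × ℕ} (hx : x ∈ symList) :
    ∃ b : Fin 27, symList.getD b.val (0,0,0) = x := by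
  obtain ⟨i, hi, hget⟩ := List.mem_iff_getElem.1 hx
  refine ⟨⟨i, by rw [← symLen]; exact hi⟩, ?_⟩
  rw [List.getD_eq_getElem _ _ hi]; exact hget

lemma t_ex {p q : Finset (ℕ × ℕ × ℕ) × ℕ} (hp : p ∈ P) (hq : q ∈ P)
    (h : ∃ x ∈ p.1, x ∈ q.1) : p.2 &&& q.2 ≠ 0 := by
  obtain ⟨x, hx1, hx2⟩ := h
  obtain ⟨b, hb⟩ := mem_sym_index (memP p hp x hx1)
  have h1 : p.2.testBit b.val = true := (bitP p hp b).1 (hb ▸ hx1)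
  have h2 : q.2.testBit b.val = true := (bitP q hq b).1 (hb ▸ hx2)
  exact ne_zero_of_testBit (by rw [Nat.testBit_land, h1, h2]; rfl)

lemma t_sub {p t : Finset (ℕ × ℕ × ℕ) × ℕ} (hp : p ∈ P) (ht : t ∈ Q)
    (h : p.2 ||| t.2 = t.2) : p.1 ⊆ t.1 := by
  intro x hx
  obtain ⟨b, hb⟩ := mem_sym_index (memP p hp x hx)
  have h1 : p.2.testBit b.val = true := (bitP p hp b).1 (hb ▸ hx)
  have h2 : t.2.testBit b.val = true := by
    rw [← h, Nat.testBit_or, h1, Bool.true_or]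
  exact hb ▸ (bitQ t ht b).2 h2

lemma t_tot {p q r : Finset (ℕ × ℕ × ℕ) × ℕ} (hp : p ∈ P) (hq : q ∈ P) (hr : r ∈ P)
    (h : p.1 ∩ q.1 ∩ r.1 = ∅) : p.2 &&& q.2 &&& r.2 = 0 := by
  by_contra hc
  obtain ⟨i, hi⟩ := exists_testBit hc
  rw [Nat.testBit_land, Nat.testBit_land, Bool.and_eq_true, Bool.and_eq_true] at hi
  obtain ⟨⟨h1, h2⟩, h3⟩ := hi
  have hilt : i < 27 := bit_lt (ltP p hp) h1
  set b : Fin 27 := ⟨i, hilt⟩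
  set x := symList.getD i (0,0,0)
  have hx1 : x ∈ p.1 := (bitP p hp b).2 h1
  have hx2 : x ∈ q.1 := (bitP q hq b).2 h2
  have hx3 : x ∈ r.1 := (bitP r hr b).2 h3
  have : x ∈ p.1 ∩ q.1 ∩ r.1 := by
    simp [Finset.mem_inter, hx1, hx2, hx3]
  rw [h] at this
  exact absurd this (Finset.notMem_empty x)

lemma mem_P_of_HEdges : ∀ E ∈ HEdges, ∃ p ∈ P, p.1 = E := by
  classical
  intro E hE
  simp only [HEdges, Finset.mem_filter, Finset.mem_powersetCard] at hE
  obtain ⟨⟨hsub, hcard⟩, hpair, hcol⟩ := hE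
  obtain ⟨u, v, w, huv, huw, hvw, rfl⟩ := Finset.card_eq_three.1 hcard
  have hu : u ∈ HSyms := hsub (by simp)
  have hv : v ∈ HSyms := hsub (by simp)
  have hw : w ∈ HSyms := hsub (by simp)
  have h1 := hpair u (by simp) v (by simp) huv
  have h2 := hpair u (by simp) w (by simp) huw
  have h3 := hpair v (by simp) w (by simp) hvw
  rcases factD u hu v hv h1.2 h1.1 w hw h2.2 h3.2 huw hvw with hn | hm
  · refine absurd ?_ (not_collinear_of_ncolZ hn)
    have hcoe : (↑({u, v, w} : Finset (ℕ × ℕ × ℕ)) : Set (ℕ × ℕ × ℕ)) = {u, v, w} := by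
      simp
    rw [hcoe, Set.image_insert_eq, Set.image_insert_eq, Set.image_singleton] at hcol
    exact hcol
  · obtain ⟨p, hp, hp1⟩ := hm
    exact ⟨p, hp, hp1⟩

/-- Proposition A.1 (no empty triangles in the Hessian polyhedron): if three distinct
edges pairwise intersect nontrivially but have empty total intersection, then some face
contains all three. -/
theorem stmt_18 (E₁ E₂ E₃ : Finset (ℕ × ℕ × ℕ))
    (h₁ : E₁ ∈ HEdges) (h₂ : E₂ ∈ HEdges) (h₃ : E₃ ∈ HEdges)
    (h₁₂ : E₁ ≠ E₂) (h₁₃ : E₁ ≠ E₃) (h₂₃ : E₂ ≠ E₃)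
    (i₁₂ : (E₁ ∩ E₂).Nonempty) (i₁₃ : (E₁ ∩ E₃).Nonempty) (i₂₃ : (E₂ ∩ E₃).Nonempty)
    (itot : E₁ ∩ E₂ ∩ E₃ = ∅) :
    ∃ k : Fin 27, E₁ ⊆ HFaces k ∧ E₂ ⊆ HFaces k ∧ E₃ ⊆ HFaces k := by
  obtain ⟨p, hp, hpE⟩ := mem_P_of_HEdges E₁ h₁
  obtain ⟨q, hq, hqE⟩ := mem_P_of_HEdges E₂ h₂
  obtain ⟨r, hr, hrE⟩ := mem_P_of_HEdges E₃ h₃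
  subst hpE; subst hqE; subst hrE
  have toEx : ∀ A B : Finset (ℕ × ℕ × ℕ), (A ∩ B).Nonempty → ∃ x ∈ A, x ∈ B := by
    rintro A B ⟨x, hx⟩
    exact ⟨x, (Finset.mem_inter.1 hx).1, (Finset.mem_inter.1 hx).2⟩
  obtain ⟨t, ht, hs1, hs2, hs3⟩ :=
    maskM p hp q hq (t_ex hp hq (toEx _ _ i₁₂)) r hr (t_ex hp hr (toEx _ _ i₁₃))
      (t_ex hq hr (toEx _ _ i₂₃)) (t_tot hp hq hr itot)
  obtain ⟨k, hk⟩ := QFaces t ht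
  exact ⟨k, hk ▸ t_sub hp ht hs1, hk ▸ t_sub hq ht hs2, hk ▸ t_sub hr ht hs3⟩
end
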